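/- arXiv:2204.09870 — 8 statements merged into one kernel-verified Lean document; each statement's English description precedes it below -/
import Mathlib

section
/- Let G be a finite simple graph with m edges, adjacency matrix A(G), least adjacency eigenvalue λ_n(G), and edge bipartiteness ε_b(G). Then λ_n(G)² ≤ m − ε_b(G). -/
/-!
Let `x` be a unit eigenvector for `λ = λₙ(G)`, so that `λ = ∑ x i * x j` over ordered adjacent
pairs, and `λ ≤ 0` because `tr A = 0`. Let `H` be the subgraph of edges whose endpoints carry
opposite signs under `x`. Deleting the other edges makes `G` bipartite, so `ε_b(G) ≤ m - e(H)`,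
and it only drops nonnegative terms, so `λ ≥ ∑_H x i * x j`. By Cauchy–Schwarz,
`(∑_H x i * x j)² ≤ 2 e(H) · ∑_H (x i * x j)² ≤ 2 e(H) · 2ab ≤ e(H)`,
where `a` and `b` are the squared masses of `x` on the two sides, `a + b = 1`.
-/

open Matrix Finset

/-- `σ` is a sign function on the edges of `G`: symmetric and `±1` on edges. -/
def IsSignFn {n : ℕ} (G : SimpleGraph (Fin n)) (σ : Fin n → Fin n → ℝ) : Prop :=
  (∀ i j, σ i j = σ j i) ∧ ∀ i j, G.Adj i j → σ i j = 1 ∨ σ i j = -1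

/-- The adjacency matrix of the signed graph `(G, σ)`. -/
def signedAdj {n : ℕ} (G : SimpleGraph (Fin n)) [DecidableRel G.Adj]
    (σ : Fin n → Fin n → ℝ) : Matrix (Fin n) (Fin n) ℝ :=
  fun i j => if G.Adj i j then σ i j else 0

/-- The sign of a walk: the product of the signs of its edges (with multiplicity). -/
def walkSign {V : Type*} {G : SimpleGraph V} (σ : V → V → ℝ) {u v : V} (w : G.Walk u v) : ℝ :=
  (w.darts.map fun d => σ d.toProd.1 d.toProd.2).prod

/-- A signed graph is balanced if every cycle has sign `+1`. -/
def IsBalanced {V : Type*} (G : SimpleGraph V) (σ : V → V → ℝ) : Prop :=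
  ∀ (u : V) (w : G.Walk u u), w.IsCycle → walkSign σ w = 1

/-- The set of cardinalities of edge sets whose deletion makes `(G, σ)` balanced.
The frustration index is the least element of this set. -/
def FrustrationSet {n : ℕ} (G : SimpleGraph (Fin n)) (σ : Fin n → Fin n → ℝ) : Set ℕ :=
  {k | ∃ F : Finset (Sym2 (Fin n)), ↑F ⊆ G.edgeSet ∧
    IsBalanced (G.deleteEdges ↑F) σ ∧ F.card = k}

/-- `S` induces a balanced complete subgraph of `(G, σ)`:
`S` is a clique and every cycle inside `S` has sign `+1`. -/
def IsBalancedClique {n : ℕ} (G : SimpleGraph (Fin n)) (σ : Fin n → Fin n → ℝ)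
    (S : Finset (Fin n)) : Prop :=
  G.IsClique (S : Set (Fin n)) ∧
    ∀ (u : Fin n) (w : G.Walk u u), w.IsCycle → (∀ v ∈ w.support, v ∈ S) → walkSign σ w = 1

/-- The set of cardinalities of balanced cliques of `(G, σ)`.
The balanced clique number is the greatest element of this set. -/
def BalancedCliqueSet {n : ℕ} (G : SimpleGraph (Fin n)) (σ : Fin n → Fin n → ℝ) : Set ℕ :=
  {k | ∃ S : Finset (Fin n), IsBalancedClique G σ S ∧ S.card = k}

/-- Switching equivalence of two sign functions on the same underlying graph. -/
def SwitchingEquiv {n : ℕ} (G : SimpleGraph (Fin n)) (σ₁ σ₂ : Fin n → Fin n → ℝ) : Prop :=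
  ∃ η : Fin n → ℝ, (∀ v, η v = 1 ∨ η v = -1) ∧ ∀ i j, G.Adj i j → σ₂ i j = η i * σ₁ i j * η j

/-- The set of cardinalities of edge sets whose deletion makes `G` bipartite.
The edge bipartiteness is the least element of this set. -/
def EdgeBipartitenessSet {n : ℕ} (G : SimpleGraph (Fin n)) : Set ℕ :=
  {k | ∃ F : Finset (Sym2 (Fin n)), ↑F ⊆ G.edgeSet ∧
    (G.deleteEdges ↑F).Colorable 2 ∧ F.card = k}

namespace SimpleGraph

variable {V : Type*} (G : SimpleGraph V)

def cutGraph (s : Finset V) : SimpleGraph V where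
  Adj i j := G.Adj i j ∧ (i ∈ s ↔ j ∉ s)
  symm := ⟨fun _ _ h => ⟨h.1.symm, by tauto⟩⟩
  loopless := ⟨fun i h => G.loopless.irrefl i h.1⟩

instance [DecidableEq V] [DecidableRel G.Adj] (s : Finset V) : DecidableRel (G.cutGraph s).Adj :=
  fun _ _ => instDecidableAnd

theorem cutGraph_le (s : Finset V) : G.cutGraph s ≤ G := fun _ _ h => h.1

theorem colorable_two_cutGraph (s : Finset V) : (G.cutGraph s).Colorable 2 := by
  classical
  refine ⟨Coloring.mk (fun v => if v ∈ s then (0 : Fin 2) else 1) fun {v w} h => ?_⟩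
  have := h.2
  by_cases hv : v ∈ s <;> simp_all

variable [Fintype V] [DecidableEq V] [DecidableRel G.Adj]

theorem dotProduct_mulVec_adjMatrix_cutGraph_nonneg_le (x : V → ℝ) :
    x ⬝ᵥ (G.cutGraph {v | 0 ≤ x v}).adjMatrix ℝ *ᵥ x ≤ x ⬝ᵥ G.adjMatrix ℝ *ᵥ x := by
  simp only [dotProduct_mulVec_adjMatrix]
  refine sum_le_sum fun i _ => sum_le_sum fun j _ => ?_
  by_cases hij : G.Adj i j
  · by_cases hcut : (G.cutGraph {v | 0 ≤ x v}).Adj i j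
    · simp [hij, hcut]
    · have hcut' : ¬(0 ≤ x i ↔ x j < 0) := by simpa [cutGraph, hij] using hcut
      simp only [hij, hcut, if_true, if_false]
      rcases le_or_gt 0 (x i) with hi | hi <;> rcases le_or_gt 0 (x j) with hj | hj
      · exact mul_nonneg hi hj
      · exact absurd (iff_of_true hi hj) hcut'
      · exact absurd (iff_of_false hi.not_ge hj.not_gt) hcut'
      · exact (mul_pos_of_neg_of_neg hi hj).le
  · simp [hij, show ¬(G.cutGraph _).Adj i j from fun h => hij h.1]

theorem sum_cutGraph_adj_sq_le (s : Finset V) (x : V → ℝ) :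
    ∑ i, ∑ j, (if (G.cutGraph s).Adj i j then (x i * x j) ^ 2 else 0) ≤ (x ⬝ᵥ x) ^ 2 / 2 := by
  -- `u` and `v` split `x ^ 2` along `s`; a cut edge `ij` contributes to exactly one of
  -- `u i * v j`, `v i * u j`, so the sum is at most `2 ab ≤ (a + b) ^ 2 / 2`.
  set u : V → ℝ := fun i => if i ∈ s then x i ^ 2 else 0
  set v : V → ℝ := fun i => if i ∈ s then 0 else x i ^ 2
  have hterm : ∀ i j, (if (G.cutGraph s).Adj i j then (x i * x j) ^ 2 else 0) ≤
      u i * v j + v i * u j := by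
    intro i j
    by_cases hi : i ∈ s <;> by_cases hj : j ∈ s <;> by_cases hij : (G.cutGraph s).Adj i j <;>
      simp_all [u, v, cutGraph, mul_pow] <;> positivity
  have huv : ∑ i, u i + ∑ i, v i = x ⬝ᵥ x := by
    rw [← sum_add_distrib, dotProduct]
    exact sum_congr rfl fun i _ => by by_cases hi : i ∈ s <;> simp [u, v, hi, sq]
  calc ∑ i, ∑ j, (if (G.cutGraph s).Adj i j then (x i * x j) ^ 2 else 0)
      ≤ ∑ i, ∑ j, (u i * v j + v i * u j) := sum_le_sum fun i _ => sum_le_sum fun j _ => hterm i j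
    _ = 2 * (∑ i, u i) * ∑ i, v i := by
      simp only [sum_add_distrib, ← mul_sum, ← sum_mul]; ring
    _ ≤ (x ⬝ᵥ x) ^ 2 / 2 := by rw [← huv]; nlinarith [sq_nonneg (∑ i, u i - ∑ i, v i)]

theorem sq_dotProduct_mulVec_adjMatrix_cutGraph_le (s : Finset V) (x : V → ℝ) :
    (x ⬝ᵥ (G.cutGraph s).adjMatrix ℝ *ᵥ x) ^ 2 ≤ #(G.cutGraph s).edgeFinset * (x ⬝ᵥ x) ^ 2 := by
  set H := G.cutGraph s
  have hCS := sum_mul_sq_le_sq_mul_sq univ (fun p : V × V => if H.Adj p.1 p.2 then (1 : ℝ) else 0)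
    (fun p => if H.Adj p.1 p.2 then x p.1 * x p.2 else 0)
  have hform : ∑ p : V × V, (if H.Adj p.1 p.2 then (1 : ℝ) else 0) *
      (if H.Adj p.1 p.2 then x p.1 * x p.2 else 0) = x ⬝ᵥ H.adjMatrix ℝ *ᵥ x := by
    rw [dotProduct_mulVec_adjMatrix, ← Fintype.sum_prod_type']
    simp only [boole_mul]
    exact sum_congr rfl fun p _ => by split_ifs <;> rfl
  have hcard : ∑ p : V × V, (if H.Adj p.1 p.2 then (1 : ℝ) else 0) ^ 2 = 2 * #H.edgeFinset := by
    simp only [ite_pow, one_pow, ne_eq, OfNat.ofNat_ne_zero, not_false_eq_true, zero_pow,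
      sum_boole]
    exact_mod_cast (two_mul_card_edgeFinset H).symm
  have hsq : ∑ p : V × V, (if H.Adj p.1 p.2 then x p.1 * x p.2 else 0) ^ 2 ≤ (x ⬝ᵥ x) ^ 2 / 2 := by
    rw [Fintype.sum_prod_type]
    simpa only [ite_pow, ne_eq, OfNat.ofNat_ne_zero, not_false_eq_true, zero_pow] using
      G.sum_cutGraph_adj_sq_le s x
  rw [hform, hcard] at hCS
  nlinarith [hCS, hsq, (Nat.cast_nonneg #H.edgeFinset : (0 : ℝ) ≤ _)]

end SimpleGraph

theorem add_card_edgeFinset_le_of_colorable_two {n : ℕ} {G H : SimpleGraph (Fin n)}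
    [DecidableRel G.Adj] [DecidableRel H.Adj] {εb : ℕ} (hεb : IsLeast (EdgeBipartitenessSet G) εb)
    (hHG : H ≤ G) (hH : H.Colorable 2) : εb + #H.edgeFinset ≤ #G.edgeFinset := by
  have hdel : G.deleteEdges ↑(G.edgeFinset \ H.edgeFinset) ≤ H := fun v w hvw => by
    rw [SimpleGraph.deleteEdges_adj] at hvw
    by_contra h
    exact hvw.2 (mem_sdiff.2 ⟨SimpleGraph.mem_edgeFinset.2 hvw.1, by simpa using h⟩)
  have hmem : #(G.edgeFinset \ H.edgeFinset) ∈ EdgeBipartitenessSet G :=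
    ⟨_, fun e he => SimpleGraph.mem_edgeFinset.1 (mem_sdiff.1 he).1, hH.mono_left hdel, rfl⟩
  have hsplit := card_sdiff_add_card_eq_card (SimpleGraph.edgeFinset_mono hHG)
  have := hεb.2 hmem
  omega

theorem Matrix.IsHermitian.exists_eigenvalues_nonpos {𝕜 ι : Type*} [RCLike 𝕜] [Fintype ι]
    [DecidableEq ι] [Nonempty ι] {A : Matrix ι ι 𝕜} (hA : A.IsHermitian) (htr : A.trace = 0) :
    ∃ i, hA.eigenvalues i ≤ 0 := by
  have hsum : ∑ i, hA.eigenvalues i = 0 := by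
    exact_mod_cast hA.trace_eq_sum_eigenvalues.symm.trans htr
  obtain ⟨i, -, hi⟩ :=
    exists_le_of_sum_le univ_nonempty (f := hA.eigenvalues) (g := 0) (by simp [hsum])
  exact ⟨i, hi⟩

/-- `λ_n(G)² ≤ m - ε_b(G)`. -/
theorem stmt_3 {n : ℕ} (G : SimpleGraph (Fin n)) [DecidableRel G.Adj]
    (hA : (G.adjMatrix ℝ).IsHermitian)
    (lamn : ℝ) (hlam : IsLeast (Set.range hA.eigenvalues) lamn)
    (εb : ℕ) (hεb : IsLeast (EdgeBipartitenessSet G) εb) :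
    lamn ^ 2 ≤ (G.edgeFinset.card : ℝ) - εb := by
  obtain ⟨i, rfl⟩ := hlam.1
  have : Nonempty (Fin n) := ⟨i⟩
  set x : Fin n → ℝ := ⇑(hA.eigenvectorBasis i)
  have hx : x ⬝ᵥ x = 1 := by
    have h := real_inner_self_eq_norm_sq (hA.eigenvectorBasis i)
    rw [hA.eigenvectorBasis.orthonormal.1 i, EuclideanSpace.inner_eq_star_dotProduct] at h
    simpa using h
  have heig : hA.eigenvalues i = x ⬝ᵥ G.adjMatrix ℝ *ᵥ x := by simpa using hA.eigenvalues_eq i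
  have hnonpos : hA.eigenvalues i ≤ 0 := by
    obtain ⟨j, hj⟩ := hA.exists_eigenvalues_nonpos (G.trace_adjMatrix ℝ)
    exact (hlam.2 ⟨j, rfl⟩).trans hj
  have hcut := G.dotProduct_mulVec_adjMatrix_cutGraph_nonneg_le x
  have hsq := G.sq_dotProduct_mulVec_adjMatrix_cutGraph_le {j | 0 ≤ x j} x
  set H := G.cutGraph {j | 0 ≤ x j}
  have hεH : εb + #H.edgeFinset ≤ #G.edgeFinset :=
    add_card_edgeFinset_le_of_colorable_two hεb (G.cutGraph_le _) (G.colorable_two_cutGraph _)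
  calc hA.eigenvalues i ^ 2 ≤ (x ⬝ᵥ H.adjMatrix ℝ *ᵥ x) ^ 2 := by
        rw [heig] at hnonpos ⊢
        nlinarith
    _ ≤ (#H.edgeFinset : ℝ) := by simpa [hx] using hsq
    _ ≤ (#G.edgeFinset : ℝ) - εb := by
      rw [le_sub_iff_add_le']
      exact_mod_cast hεH
end

section
/- Let G be a finite simple graph on n = 2k vertices with adjacency matrix A(G) and least eigenvalue λ_n(G). Then |λ_n(G)| ≤ k. -/
open Matrix Finset

/-
For a unit eigenvector `v` of `A(G)` with eigenvalue `μ`, write `v = v⁺ - v⁻`. Only the edges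
joining the positive and the negative support of `v` contribute negatively to `vᵀ A v`, so
`μ = vᵀ A v ≥ -2 (∑ v⁺)(∑ v⁻)`. By Cauchy–Schwarz on the two supports, of sizes `s + t ≤ n`,
`(∑ v⁺)² (∑ v⁻)² ≤ s t ‖v⁺‖² ‖v⁻‖² ≤ (n/2)² (1/2)²`, hence `μ ≥ -n/2`. Since `tr A(G) = 0`,
the least eigenvalue is also `≤ 0`.
-/

lemma two_mul_mul_le_of_sq_le {a b s t P Q n : ℝ} (ha : 0 ≤ a) (hb : 0 ≤ b)
    (hs : 0 ≤ s) (ht : 0 ≤ t) (hP : 0 ≤ P) (hQ : 0 ≤ Q)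
    (has : a ^ 2 ≤ s * P) (hbt : b ^ 2 ≤ t * Q) (hst : s + t ≤ n) :
    2 * (a * b) ≤ n * (P + Q) / 2 := by
  have hn : 0 ≤ n := by linarith
  refine (pow_le_pow_iff_left₀ (by positivity) (by positivity) two_ne_zero).mp ?_
  calc (2 * (a * b)) ^ 2 = 4 * (a ^ 2 * b ^ 2) := by ring
    _ ≤ 4 * ((s * P) * (t * Q)) := by gcongr
    _ = (4 * (s * t)) * (4 * (P * Q)) / 4 := by ring
    _ ≤ (s + t) ^ 2 * (P + Q) ^ 2 / 4 := by
        gcongr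
        · nlinarith [sq_nonneg (s - t)]
        · nlinarith [sq_nonneg (P - Q)]
    _ ≤ (n * (P + Q) / 2) ^ 2 := by
        rw [div_pow, mul_pow]; gcongr; norm_num

lemma Real.posPart_sq_add_negPart_sq (x : ℝ) : x⁺ ^ 2 + x⁻ ^ 2 = x ^ 2 := by
  rcases le_total 0 x with hx | hx
  · simp [posPart_eq_self.mpr hx, negPart_eq_zero.mpr hx]
  · simp [posPart_eq_zero.mpr hx, negPart_eq_neg.mpr hx]

lemma Real.neg_posPart_mul_negPart_add_le_mul (x y : ℝ) :
    -(x⁺ * y⁻ + x⁻ * y⁺) ≤ x * y := by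
  calc -(x⁺ * y⁻ + x⁻ * y⁺) ≤ x⁺ * y⁺ + x⁻ * y⁻ - (x⁺ * y⁻ + x⁻ * y⁺) := by
        have := mul_nonneg (posPart_nonneg x) (posPart_nonneg y)
        have := mul_nonneg (negPart_nonneg x) (negPart_nonneg y)
        linarith
    _ = x * y := by
        conv_rhs => rw [← posPart_sub_negPart x, ← posPart_sub_negPart y]
        ring

section

variable {V : Type*} [Fintype V]

lemma Finset.sq_sum_le_card_filter_ne_zero_mul_sum_sq (f : V → ℝ) :
    (∑ i, f i) ^ 2 ≤ #{i | f i ≠ 0} * ∑ i, f i ^ 2 := by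
  classical
  rw [← sum_filter_of_ne (p := fun i => f i ≠ 0) fun _ _ h => h]
  calc _ ≤ #{i | f i ≠ 0} * ∑ i with f i ≠ 0, f i ^ 2 := sq_sum_le_card_mul_sum_sq
    _ ≤ #{i | f i ≠ 0} * ∑ i, f i ^ 2 := by
        gcongr ?_ * ?_
        exact sum_le_sum_of_subset_of_nonneg (subset_univ _) fun i _ _ => sq_nonneg (f i)

lemma card_posPart_ne_zero_add_card_negPart_ne_zero_le (v : V → ℝ) :
    (#{i | (v i)⁺ ≠ 0} + #{i | (v i)⁻ ≠ 0} : ℝ) ≤ Fintype.card V := by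
  classical
  have hdisj : Disjoint ({i | (v i)⁺ ≠ 0} : Finset V) ({i | (v i)⁻ ≠ 0} : Finset V) := by
    rw [disjoint_filter]
    intro i _ hpos hneg
    rw [ne_eq, posPart_eq_zero] at hpos
    rw [ne_eq, negPart_eq_zero] at hneg
    linarith
  exact_mod_cast (card_union_of_disjoint hdisj).symm.trans_le (card_le_univ _)

theorem Matrix.neg_card_div_two_mul_dotProduct_self_le (M : Matrix V V ℝ)
    (hM₀ : ∀ i j, 0 ≤ M i j) (hM₁ : ∀ i j, M i j ≤ 1) (v : V → ℝ) :
    -(Fintype.card V / 2 : ℝ) * (v ⬝ᵥ v) ≤ v ⬝ᵥ (M *ᵥ v) := by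
  set a := ∑ i, (v i)⁺
  set b := ∑ i, (v i)⁻
  have hcross : -(2 * (a * b)) ≤ v ⬝ᵥ (M *ᵥ v) := by
    calc -(2 * (a * b)) = ∑ i, ∑ j, -((v i)⁺ * (v j)⁻ + (v i)⁻ * (v j)⁺) := by
          simp only [a, b, sum_neg_distrib, sum_add_distrib, ← mul_sum, ← sum_mul]; ring
      _ ≤ ∑ i, ∑ j, M i j * (v i * v j) := by
          refine sum_le_sum fun i _ => sum_le_sum fun j _ => ?_
          have := Real.neg_posPart_mul_negPart_add_le_mul (v i) (v j)
          have := mul_nonneg (posPart_nonneg (v i)) (negPart_nonneg (v j))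
          have := mul_nonneg (negPart_nonneg (v i)) (posPart_nonneg (v j))
          nlinarith [hM₀ i j, hM₁ i j]
      _ = v ⬝ᵥ (M *ᵥ v) := by
          simp only [dotProduct, mulVec, mul_sum]
          exact sum_congr rfl fun i _ => sum_congr rfl fun j _ => by ring
  have hnorm : v ⬝ᵥ v = ∑ i, (v i)⁺ ^ 2 + ∑ i, (v i)⁻ ^ 2 := by
    simp_rw [← sum_add_distrib, Real.posPart_sq_add_negPart_sq, dotProduct, sq]
  have hab := two_mul_mul_le_of_sq_le (sum_nonneg fun i _ => posPart_nonneg (v i))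
    (sum_nonneg fun i _ => negPart_nonneg (v i)) (Nat.cast_nonneg _) (Nat.cast_nonneg _)
    (sum_nonneg fun i _ => sq_nonneg _) (sum_nonneg fun i _ => sq_nonneg _)
    (sq_sum_le_card_filter_ne_zero_mul_sum_sq _) (sq_sum_le_card_filter_ne_zero_mul_sum_sq _)
    (card_posPart_ne_zero_add_card_negPart_ne_zero_le v)
  rw [hnorm]
  linarith

theorem Matrix.IsHermitian.neg_card_div_two_le_eigenvalues [DecidableEq V] {M : Matrix V V ℝ}
    (hM : M.IsHermitian) (hM₀ : ∀ i j, 0 ≤ M i j) (hM₁ : ∀ i j, M i j ≤ 1) (i : V) :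
    -(Fintype.card V / 2 : ℝ) ≤ hM.eigenvalues i := by
  set u := hM.eigenvectorBasis i
  have hunit : ⇑u ⬝ᵥ ⇑u = 1 := by
    have h := real_inner_self_eq_norm_sq u
    rw [EuclideanSpace.inner_eq_star_dotProduct, hM.eigenvectorBasis.orthonormal.1 i] at h
    simpa using h
  have := M.neg_card_div_two_mul_dotProduct_self_le hM₀ hM₁ u
  rw [hM.eigenvalues_eq i]
  simpa [hunit] using this

theorem Matrix.IsHermitian.exists_eigenvalues_nonpos_of_trace_eq_zero [DecidableEq V] [Nonempty V]
    {M : Matrix V V ℝ} (hM : M.IsHermitian) (htr : M.trace = 0) : ∃ i, hM.eigenvalues i ≤ 0 := by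
  obtain ⟨i, -, hi⟩ := exists_le_of_sum_le (f := hM.eigenvalues) (g := 0) univ_nonempty (by
    simpa [hM.trace_eq_sum_eigenvalues] using htr.le)
  exact ⟨i, hi⟩

end

/-- For a graph on `n = 2k` vertices, `|λ_n(G)| ≤ k`. -/
theorem stmt_4 (k : ℕ) (G : SimpleGraph (Fin (2 * k))) [DecidableRel G.Adj]
    (hA : (G.adjMatrix ℝ).IsHermitian)
    (lamn : ℝ) (hlam : IsLeast (Set.range hA.eigenvalues) lamn) :
    |lamn| ≤ (k : ℝ) := by
  obtain ⟨⟨i, rfl⟩, hleast⟩ := hlam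
  have : Nonempty (Fin (2 * k)) := ⟨i⟩
  have hentries : ∀ a b, 0 ≤ G.adjMatrix ℝ a b ∧ G.adjMatrix ℝ a b ≤ 1 := fun a b => by
    by_cases h : G.Adj a b <;> simp [h]
  have hlow := hA.neg_card_div_two_le_eigenvalues (fun a b => (hentries a b).1)
    (fun a b => (hentries a b).2) i
  obtain ⟨j, hj⟩ := hA.exists_eigenvalues_nonpos_of_trace_eq_zero (G.trace_adjMatrix ℝ)
  have hij : hA.eigenvalues i ≤ hA.eigenvalues j := hleast ⟨j, rfl⟩
  rw [Fintype.card_fin] at hlow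
  push_cast at hlow
  rw [abs_le]
  constructor <;> linarith [(Nat.cast_nonneg k : (0 : ℝ) ≤ k)]
end

section
/- (Turán's inequality for signed graphs) Let Σ = (G, σ) be a signed graph with n vertices, m edges, balanced clique number ω_b(Σ) and frustration index ε(Σ). Then m ≤ ε(Σ) + (n²/2)·(1 − 1/ω_b(Σ)). -/
open Matrix Finset

/-
Delete a minimum frustrating edge set F, so that m ≤ ε + m', where m' counts the edges of the
balanced graph Σ - F. Every clique of Σ - F is a balanced clique of Σ, since its cycles are cycles
of Σ - F; hence Σ - F has no clique on ω_b + 1 vertices, and Turán's theorem bounds m' by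
(n²/2)(1 - 1/ω_b).
-/

open SimpleGraph

lemma walkSign_transfer {V : Type*} {G H : SimpleGraph V} (σ : V → V → ℝ) {u v : V}
    (w : G.Walk u v) (hw : ∀ e ∈ w.edges, e ∈ H.edgeSet) :
    walkSign σ (w.transfer H hw) = walkSign σ w := by
  induction w with
  | nil => rfl
  | cons _ p ih =>
    simp only [walkSign, Walk.transfer, Walk.darts_cons, List.map_cons, List.prod_cons] at ih ⊢
    exact congrArg (σ _ _ * ·) (ih _)

lemma isBalancedClique_of_isBalanced {n : ℕ} {G H : SimpleGraph (Fin n)} {σ : Fin n → Fin n → ℝ}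
    (hHG : H ≤ G) (hH : IsBalanced H σ) {S : Finset (Fin n)} (hS : H.IsClique (S : Set (Fin n))) :
    IsBalancedClique G σ S := by
  refine ⟨hS.mono hHG, fun u w hw hwS => ?_⟩
  have hedges : ∀ e ∈ w.edges, e ∈ H.edgeSet := by
    intro e he
    induction e with
    | h a b =>
      exact hS (hwS a (w.fst_mem_support_of_mem_edges he))
        (hwS b (w.snd_mem_support_of_mem_edges he)) (w.adj_of_mem_edges he).ne
  rw [← walkSign_transfer σ w hedges]
  exact hH u _ (hw.transfer hedges)

lemma cliqueFree_of_isBalanced {n : ℕ} {G H : SimpleGraph (Fin n)} {σ : Fin n → Fin n → ℝ}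
    (hHG : H ≤ G) (hH : IsBalanced H σ) {ω : ℕ} (hω : ω ∈ upperBounds (BalancedCliqueSet G σ)) :
    H.CliqueFree (ω + 1) := fun S hS =>
  absurd (hω ⟨S, isBalancedClique_of_isBalanced hHG hH hS.1, hS.2⟩) (by omega)

lemma card_edgeFinset_le_card_add_card_deleteEdges {V : Type*} [Fintype V] (G : SimpleGraph V)
    [DecidableRel G.Adj] (F : Finset (Sym2 V)) [DecidableRel (G.deleteEdges F).Adj] :
    #G.edgeFinset ≤ #F + #(G.deleteEdges F).edgeFinset := by
  classical
  rw [edgeFinset_deleteEdges, add_comm]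
  exact card_le_card_sdiff_add_card

lemma SimpleGraph.CliqueFree.card_edgeFinset_le_turan {V : Type*} [Fintype V] {G : SimpleGraph V}
    [DecidableRel G.Adj] {r : ℕ} (hG : G.CliqueFree (r + 1)) :
    (#G.edgeFinset : ℝ) ≤ (Fintype.card V : ℝ) ^ 2 / 2 * (1 - 1 / r) := by
  rcases r.eq_zero_or_pos with rfl | hr
  · -- here `1 / r = 0`, and a graph without 1-cliques has no vertices
    have : IsEmpty V := cliqueFree_one.mp hG
    simp [Finset.eq_empty_of_isEmpty G.edgeFinset]
  obtain ⟨T, _, hT⟩ := exists_isTuranMaximal (V := V) hr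
  have hGT : #G.edgeFinset ≤ #T.edgeFinset := hT.2 hG
  rw [hT.nonempty_iso_turanGraph.some.card_edgeFinset_eq] at hGT
  have hTuran : 2 * r * #G.edgeFinset ≤ (r - 1) * Fintype.card V ^ 2 :=
    (Nat.mul_le_mul_left _ hGT).trans mul_card_edgeFinset_turanGraph_le
  have hTuran' : 2 * r * (#G.edgeFinset : ℝ) ≤ (r - 1) * (Fintype.card V : ℝ) ^ 2 := by
    simpa [Nat.cast_sub hr] using (Nat.cast_le (α := ℝ)).2 hTuran
  have hr' : (0 : ℝ) < r := by exact_mod_cast hr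
  rw [show (Fintype.card V : ℝ) ^ 2 / 2 * (1 - 1 / r) = (r - 1) * Fintype.card V ^ 2 / (2 * r) by
    field_simp, le_div_iff₀ (by positivity)]
  linarith

theorem stmt_6_general {n : ℕ} (G : SimpleGraph (Fin n)) [DecidableRel G.Adj]
    (σ : Fin n → Fin n → ℝ)
    (ωb : ℕ) (hω : IsGreatest (BalancedCliqueSet G σ) ωb)
    (ε : ℕ) (hε : IsLeast (FrustrationSet G σ) ε) :
    (G.edgeFinset.card : ℝ) ≤ ε + (n : ℝ) ^ 2 / 2 * (1 - 1 / ωb) := by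
  classical
  obtain ⟨F, -, hF, rfl⟩ := hε.1
  have hcf := cliqueFree_of_isBalanced (G.deleteEdges_le _) hF hω.2
  have hm : (#G.edgeFinset : ℝ) ≤ #F + #(G.deleteEdges F).edgeFinset := by
    exact_mod_cast card_edgeFinset_le_card_add_card_deleteEdges G F
  have hturan := hcf.card_edgeFinset_le_turan
  rw [Fintype.card_fin] at hturan
  linarith

/-- Turán's inequality for signed graphs:
`m ≤ ε(Σ) + (n²/2)(1 - 1/ω_b(Σ))`. -/
theorem stmt_6 {n : ℕ} (G : SimpleGraph (Fin n)) [DecidableRel G.Adj]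
    (σ : Fin n → Fin n → ℝ) (hσ : IsSignFn G σ)
    (ωb : ℕ) (hω : IsGreatest (BalancedCliqueSet G σ) ωb)
    (ε : ℕ) (hε : IsLeast (FrustrationSet G σ) ε) :
    (G.edgeFinset.card : ℝ) ≤ ε + (n : ℝ) ^ 2 / 2 * (1 - 1 / ωb) :=
  stmt_6_general G σ ωb hω ε hε
end

section
/- Let Σ = (G, σ) be a signed graph with m edges, balanced clique number ω_b(Σ) and frustration index ε(Σ). Then ω_b(Σ)(ω_b(Σ) − 1)/2 ≤ m − ε(Σ); consequently ω_b(Σ) ≤ ⌊1/2 + √(2(m − ε(Σ)) + 1/4)⌋. -/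
open Matrix Finset

/-!
Deleting every edge that does not lie inside a balanced clique `S` leaves a graph all of whose
cycles live in `S`, hence a balanced graph; so `ε ≤ m - #(edges inside S) ≤ m - (#S choose 2)`.
The floor bound is the quadratic inequality `(ω - 1/2)² ≤ 2(m - ε) + 1/4` solved for `ω`.
-/

open SimpleGraph

lemma walkSign_mapLe {V : Type*} {G G' : SimpleGraph V} (h : G ≤ G') (σ : V → V → ℝ)
    {u v : V} (w : G.Walk u v) : walkSign σ (w.mapLe h) = walkSign σ w := by
  simp [walkSign, Walk.darts_map, Function.comp_def, Hom.mapDart]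

namespace SimpleGraph

lemma Walk.IsCycle.forall_mem_support_of_forall_mem_edge {V : Type*} {G : SimpleGraph V}
    {S : Set V} {u : V} {w : G.Walk u u} (hw : w.IsCycle)
    (hS : ∀ e ∈ G.edgeSet, ∀ v ∈ e, v ∈ S) : ∀ v ∈ w.support, v ∈ S := by
  intro v hv
  obtain ⟨e, he, hve⟩ := (Walk.mem_support_iff_exists_mem_edges_of_not_nil hw.not_nil).1 hv
  exact hS e (w.edges_subset_edgeSet he) v hve

lemma IsClique.choose_two_le_card_inter_sym2 {V : Type*} [Fintype V] [DecidableEq V]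
    {G : SimpleGraph V} [DecidableRel G.Adj] {S : Finset V} (hS : G.IsClique (S : Set V)) :
    (#S).choose 2 ≤ #(G.edgeFinset ∩ S.sym2) := by
  rw [← Sym2.card_image_offDiag]
  refine card_le_card fun e he => ?_
  obtain ⟨⟨a, b⟩, hab, rfl⟩ := mem_image.1 he
  obtain ⟨ha, hb, hne⟩ := mem_offDiag.1 hab
  exact mem_inter.2 ⟨mem_edgeFinset.2 (hS ha hb hne), mk_mem_sym2_iff.2 ⟨ha, hb⟩⟩

end SimpleGraph

section SignedGraph

variable {n : ℕ} {G : SimpleGraph (Fin n)} [DecidableRel G.Adj] {σ : Fin n → Fin n → ℝ}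
  {S : Finset (Fin n)}

lemma IsBalancedClique.isBalanced_deleteEdges_sdiff_sym2 (hS : IsBalancedClique G σ S) :
    IsBalanced (G.deleteEdges ↑(G.edgeFinset \ S.sym2)) σ := by
  intro u w hw
  have hle := G.deleteEdges_le ↑(G.edgeFinset \ S.sym2)
  have hsupp : ∀ v ∈ w.support, v ∈ S :=
    hw.forall_mem_support_of_forall_mem_edge fun e he => by
      rw [edgeSet_deleteEdges, Set.mem_sdiff, mem_coe, mem_sdiff, mem_edgeFinset] at he
      exact mem_sym2_iff.1 (not_not.1 fun h => he.2 ⟨he.1, h⟩)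
  rw [← walkSign_mapLe hle]
  exact hS.2 u _ (hw.mapLe hle) (by rwa [Walk.support_mapLe_eq_support])

lemma IsBalancedClique.choose_two_add_le_card_edgeFinset (hS : IsBalancedClique G σ S)
    {ε : ℕ} (hε : ε ∈ lowerBounds (FrustrationSet G σ)) :
    (#S).choose 2 + ε ≤ #G.edgeFinset := by
  have hfrust : ε ≤ #(G.edgeFinset \ S.sym2) :=
    hε ⟨_, by simp, hS.isBalanced_deleteEdges_sdiff_sym2, rfl⟩
  have hclique := hS.1.choose_two_le_card_inter_sym2
  have := card_inter_add_card_sdiff G.edgeFinset S.sym2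
  omega

end SignedGraph

lemma le_floor_half_add_sqrt {k : ℕ} {x : ℝ} (h : (k : ℝ) * ((k : ℝ) - 1) / 2 ≤ x) :
    (k : ℤ) ≤ ⌊(1 / 2 : ℝ) + Real.sqrt (2 * x + 1 / 4)⌋ := by
  rw [Int.le_floor]
  have hsq : ((k : ℝ) - 1 / 2) ^ 2 ≤ 2 * x + 1 / 4 := by nlinarith
  have := (le_abs_self _).trans (Real.abs_le_sqrt hsq)
  push_cast
  linarith

theorem stmt_7_general {n : ℕ} (G : SimpleGraph (Fin n)) [DecidableRel G.Adj]
    (σ : Fin n → Fin n → ℝ)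
    (ωb : ℕ) (hω : IsGreatest (BalancedCliqueSet G σ) ωb)
    (ε : ℕ) (hε : IsLeast (FrustrationSet G σ) ε) :
    (ωb : ℝ) * ((ωb : ℝ) - 1) / 2 ≤ (G.edgeFinset.card : ℝ) - ε ∧
    (ωb : ℤ) ≤ ⌊(1 / 2 : ℝ) + Real.sqrt (2 * ((G.edgeFinset.card : ℝ) - ε) + 1 / 4)⌋ := by
  obtain ⟨S, hS, rfl⟩ := hω.1
  have hcount : ((#S).choose 2 + ε : ℕ) ≤ (#G.edgeFinset : ℝ) :=
    Nat.cast_le.2 (hS.choose_two_add_le_card_edgeFinset hε.2)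
  have hbound : (#S : ℝ) * ((#S : ℝ) - 1) / 2 ≤ #G.edgeFinset - ε := by
    push_cast [Nat.cast_choose_two] at hcount
    linarith
  exact ⟨hbound, le_floor_half_add_sqrt hbound⟩

/-- `ω_b(Σ)(ω_b(Σ)-1)/2 ≤ m - ε(Σ)`, hence
`ω_b(Σ) ≤ ⌊1/2 + √(2(m - ε(Σ)) + 1/4)⌋`. -/
theorem stmt_7 {n : ℕ} (G : SimpleGraph (Fin n)) [DecidableRel G.Adj]
    (σ : Fin n → Fin n → ℝ) (hσ : IsSignFn G σ)
    (ωb : ℕ) (hω : IsGreatest (BalancedCliqueSet G σ) ωb)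
    (ε : ℕ) (hε : IsLeast (FrustrationSet G σ) ε) :
    (ωb : ℝ) * ((ωb : ℝ) - 1) / 2 ≤ (G.edgeFinset.card : ℝ) - ε ∧
    (ωb : ℤ) ≤ ⌊(1 / 2 : ℝ) + Real.sqrt (2 * ((G.edgeFinset.card : ℝ) - ε) + 1 / 4)⌋ :=
  stmt_7_general G σ ωb hω ε hε
end

section
/- Let Σ = (G, σ) be a signed graph with m edges and frustration index ε(Σ), and let λ₁(Σ) be the largest eigenvalue of its adjacency matrix A(Σ). Then λ₁(Σ) ≤ √( 2(m − ε(Σ)) · (1 − ⌊1/2 + √(2(m − ε(Σ)) + 1/4)⌋⁻¹) ). -/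
open Matrix Finset

/-!
Let `x` be a unit eigenvector for `λ₁` and switch `σ` by the sign pattern `η` of `x`. Every term
`σ u v * x u * x v` of `λ₁ = xᵀ A(Σ) x` becomes `± |x u| * |x v|`, so `λ₁ ≤ |x|ᵀ A(H) |x|`, where `H`
is the graph of the edges that are positive after switching. `H` is balanced, hence has at most
`m - ε` edges, and its clique number `ω` satisfies `ω (ω - 1) ≤ 2 |E(H)|`. Nikiforov's bound
`|x|ᵀ A(H) |x| ≤ √(2 |E(H)| (1 - 1/ω))`, obtained from the Motzkin–Straus inequality by
Cauchy–Schwarz over the ordered adjacent pairs, finishes the proof.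
-/

namespace SimpleGraph

variable {V : Type*} [Fintype V] {H : SimpleGraph V} [DecidableRel H.Adj]

lemma card_filter_adj : #{p : V × V | H.Adj p.1 p.2} = 2 * #H.edgeFinset := by
  rw [← dart_card_eq_twice_card_edges, ← Fintype.card_subtype]
  exact Fintype.card_congr
    { toFun := fun p => ⟨p.1, p.2⟩, invFun := fun d => ⟨d.toProd, d.adj⟩,
      left_inv := fun _ => rfl, right_inv := fun _ => rfl }

lemma dotProduct_adjMatrix_mulVec_eq_sum (x y : V → ℝ) :
    x ⬝ᵥ H.adjMatrix ℝ *ᵥ y = ∑ p ∈ {p : V × V | H.Adj p.1 p.2}, x p.1 * y p.2 := by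
  rw [dotProduct_mulVec_adjMatrix, sum_filter, ← Fintype.sum_prod_type']

lemma dotProduct_adjMatrix_mulVec_le_sq_sum_sub_sum_sq [DecidableEq V] (w : V → ℝ) (hw : 0 ≤ w) :
    w ⬝ᵥ H.adjMatrix ℝ *ᵥ w ≤ (∑ v, w v) ^ 2 - ∑ v, w v ^ 2 := by
  have hoff : (∑ v, w v) ^ 2 - ∑ v, w v ^ 2 = ∑ p ∈ (univ : Finset V).offDiag, w p.1 * w p.2 := by
    rw [sq, sum_mul_sum, ← sum_product', ← diag_union_offDiag, sum_union (disjoint_diag_offDiag _),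
      sum_diag]
    simp [sq]
  rw [hoff, dotProduct_adjMatrix_mulVec_eq_sum]
  refine sum_le_sum_of_subset_of_nonneg (fun p hp => ?_) fun p _ _ => mul_nonneg (hw _) (hw _)
  simpa using (mem_filter.mp hp).2.ne

lemma inv_card_support_le_sum_sq (w : V → ℝ) (hsum : ∑ v, w v = 1) :
    (#{v | w v ≠ 0} : ℝ)⁻¹ ≤ ∑ v, w v ^ 2 := by
  have hcs := sq_sum_le_card_mul_sum_sq (s := {v | w v ≠ 0}) (f := w)
  rw [sum_filter_ne_zero, hsum, one_pow] at hcs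
  have hpos : (0 : ℝ) < #{v | w v ≠ 0} := by
    by_contra! h
    linarith [mul_eq_zero_of_left (h.antisymm (Nat.cast_nonneg _)) (∑ v ∈ {v | w v ≠ 0}, w v ^ 2)]
  exact ((inv_le_iff_one_le_mul₀' hpos).mpr hcs).trans
    (sum_le_univ_sum_of_nonneg fun v => sq_nonneg (w v))

lemma dotProduct_adjMatrix_mulVec_add_smul_single_sub_single [DecidableEq V] (w : V → ℝ)
    {a b : V} (t : ℝ) (hab : ¬H.Adj a b) :
    (w + t • (Pi.single a 1 - Pi.single b 1)) ⬝ᵥ H.adjMatrix ℝ *ᵥ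
        (w + t • (Pi.single a 1 - Pi.single b 1)) =
      w ⬝ᵥ H.adjMatrix ℝ *ᵥ w + 2 * t * ((H.adjMatrix ℝ *ᵥ w) a - (H.adjMatrix ℝ *ᵥ w) b) := by
  set d : V → ℝ := Pi.single a 1 - Pi.single b 1
  have hsymm : w ⬝ᵥ H.adjMatrix ℝ *ᵥ d = d ⬝ᵥ H.adjMatrix ℝ *ᵥ w := by
    rw [dotProduct_mulVec, ← mulVec_transpose, transpose_adjMatrix, dotProduct_comm]
  have hdw : d ⬝ᵥ H.adjMatrix ℝ *ᵥ w = (H.adjMatrix ℝ *ᵥ w) a - (H.adjMatrix ℝ *ᵥ w) b := by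
    simp [d, sub_dotProduct]
  have hdd : d ⬝ᵥ H.adjMatrix ℝ *ᵥ d = 0 := by
    simp [d, mulVec_sub, sub_dotProduct, hab, H.adj_comm b a]
  simp only [mulVec_add, mulVec_smul, add_dotProduct, dotProduct_add, smul_dotProduct,
    dotProduct_smul, smul_eq_mul, hsymm, hdw, hdd]
  ring

/-- Moving all the weight of `b` onto a non-neighbour `a` with a larger weighted degree
does not decrease the quadratic form and shrinks the support. -/
lemma exists_le_dotProduct_adjMatrix_mulVec_of_not_isClique [DecidableEq V] (w : V → ℝ)
    (hw : 0 ≤ w) (hsum : ∑ v, w v = 1) (hS : ¬H.IsClique ({v | w v ≠ 0} : Finset V)) :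
    ∃ w' : V → ℝ, 0 ≤ w' ∧ ∑ v, w' v = 1 ∧ #{v | w' v ≠ 0} < #{v | w v ≠ 0} ∧
      w ⬝ᵥ H.adjMatrix ℝ *ᵥ w ≤ w' ⬝ᵥ H.adjMatrix ℝ *ᵥ w' := by
  obtain ⟨a, ha, b, hb, hne, hab⟩ : ∃ a, w a ≠ 0 ∧ ∃ b, w b ≠ 0 ∧ a ≠ b ∧ ¬H.Adj a b := by
    simpa [IsClique, Set.Pairwise] using hS
  wlog hrow : (H.adjMatrix ℝ *ᵥ w) b ≤ (H.adjMatrix ℝ *ᵥ w) a generalizing a b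
  · exact this b hb a ha hne.symm (fun h => hab h.symm) (le_of_not_ge hrow)
  set w' := w + w b • (Pi.single a 1 - Pi.single b 1)
  have hw' : ∀ v, w' v = if v = b then 0 else if v = a then w a + w b else w v := by
    intro v
    by_cases hvb : v = b
    · subst hvb; simp [w', hne]
    · by_cases hva : v = a
      · subst hva; simp [w', hvb]
      · simp [w', hva, hvb]
  refine ⟨w', fun v => ?_, ?_, ?_, ?_⟩
  · rw [hw']
    split_ifs
    exacts [le_rfl, add_nonneg (hw a) (hw b), hw v]
  · simp [w', sum_add_distrib, ← mul_sum, hsum]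
  · refine (card_le_card fun v hv => ?_).trans_lt (card_erase_lt_of_mem (s := {v | w v ≠ 0})
      (mem_filter.mpr ⟨mem_univ b, hb⟩))
    simp only [mem_filter, mem_univ, true_and, hw'] at hv
    split_ifs at hv with hvb hva
    · exact absurd rfl hv
    · exact mem_erase.mpr ⟨hvb, by simpa [hva] using ha⟩
    · exact mem_erase.mpr ⟨hvb, by simpa using hv⟩
  · rw [dotProduct_adjMatrix_mulVec_add_smul_single_sub_single w _ hab]
    exact le_add_of_nonneg_right (mul_nonneg (mul_nonneg two_pos.le (hw b)) (sub_nonneg.mpr hrow))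

/-- The Motzkin–Straus inequality. -/
theorem dotProduct_adjMatrix_mulVec_le_one_sub_inv_cliqueNum (w : V → ℝ) (hw : 0 ≤ w)
    (hsum : ∑ v, w v = 1) : w ⬝ᵥ H.adjMatrix ℝ *ᵥ w ≤ 1 - (H.cliqueNum : ℝ)⁻¹ := by
  classical
  induction hk : #{v | w v ≠ 0} using Nat.strong_induction_on generalizing w with
  | _ k ih =>
  by_cases hS : H.IsClique ({v | w v ≠ 0} : Finset V)
  · have hsupp := inv_card_support_le_sum_sq w hsum
    have hpos : 0 < #{v | w v ≠ 0} :=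
      card_pos.mpr (nonempty_of_sum_ne_zero (by rw [sum_filter_ne_zero, hsum]; exact one_ne_zero))
    calc w ⬝ᵥ H.adjMatrix ℝ *ᵥ w ≤ (∑ v, w v) ^ 2 - ∑ v, w v ^ 2 :=
          dotProduct_adjMatrix_mulVec_le_sq_sum_sub_sum_sq w hw
      _ ≤ 1 - (#{v | w v ≠ 0} : ℝ)⁻¹ := by rw [hsum]; linarith
      _ ≤ 1 - (H.cliqueNum : ℝ)⁻¹ := by
          gcongr
          exact hS.card_le_cliqueNum
  · obtain ⟨w', hw', hsum', hlt, hle⟩ :=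
      exists_le_dotProduct_adjMatrix_mulVec_of_not_isClique w hw hsum hS
    exact hle.trans (ih _ (hk ▸ hlt) w' hw' hsum' rfl)

lemma cliqueNum_mul_sub_one_le : H.cliqueNum * (H.cliqueNum - 1) ≤ 2 * #H.edgeFinset := by
  classical
  obtain ⟨s, hs⟩ := H.exists_isNClique_cliqueNum
  rw [← hs.card_eq, Nat.mul_sub_one, ← offDiag_card, ← card_filter_adj]
  refine card_le_card fun p hp => ?_
  obtain ⟨h1, h2, hne⟩ := mem_offDiag.mp hp
  exact mem_filter.mpr ⟨mem_univ _, hs.isClique h1 h2 hne⟩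

theorem dotProduct_adjMatrix_mulVec_le_sqrt (z : V → ℝ) (hz : ∑ v, z v ^ 2 = 1) :
    z ⬝ᵥ H.adjMatrix ℝ *ᵥ z ≤ √(2 * #H.edgeFinset * (1 - (H.cliqueNum : ℝ)⁻¹)) := by
  apply Real.le_sqrt_of_sq_le
  have hms := dotProduct_adjMatrix_mulVec_le_one_sub_inv_cliqueNum (H := H) (fun v => z v ^ 2)
    (fun v => sq_nonneg (z v)) hz
  calc (z ⬝ᵥ H.adjMatrix ℝ *ᵥ z) ^ 2
      = (∑ p ∈ {p : V × V | H.Adj p.1 p.2}, 1 * (z p.1 * z p.2)) ^ 2 := by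
        simp [dotProduct_adjMatrix_mulVec_eq_sum]
    _ ≤ (∑ p ∈ {p : V × V | H.Adj p.1 p.2}, (1 : ℝ) ^ 2) *
          ∑ p ∈ {p : V × V | H.Adj p.1 p.2}, (z p.1 * z p.2) ^ 2 :=
        sum_mul_sq_le_sq_mul_sq _ _ _
    _ = 2 * #H.edgeFinset * ((fun v => z v ^ 2) ⬝ᵥ H.adjMatrix ℝ *ᵥ fun v => z v ^ 2) := by
        simp [dotProduct_adjMatrix_mulVec_eq_sum, card_filter_adj, mul_pow]
    _ ≤ 2 * #H.edgeFinset * (1 - (H.cliqueNum : ℝ)⁻¹) := by gcongr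

lemma cliqueNum_le_floor_half_add_sqrt :
    (H.cliqueNum : ℤ) ≤ ⌊(1 / 2 : ℝ) + √(2 * #H.edgeFinset + 1 / 4)⌋ := by
  rw [Int.le_floor, Int.cast_natCast]
  have hk : (H.cliqueNum : ℝ) * (H.cliqueNum - 1) ≤ 2 * #H.edgeFinset := by
    rcases Nat.eq_zero_or_pos H.cliqueNum with h | h
    · simp [h]
    · have hk := Nat.cast_le (α := ℝ).mpr H.cliqueNum_mul_sub_one_le
      push_cast [Nat.cast_sub h] at hk
      exact hk
  have := Real.abs_le_sqrt (x := (H.cliqueNum : ℝ) - 1 / 2) (y := 2 * #H.edgeFinset + 1 / 4)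
    (by nlinarith)
  linarith [le_abs_self ((H.cliqueNum : ℝ) - 1 / 2)]

lemma sqrt_mul_one_sub_inv_cliqueNum_le [Nonempty V] {e : ℝ} (he : #H.edgeFinset ≤ e) :
    √(2 * #H.edgeFinset * (1 - (H.cliqueNum : ℝ)⁻¹)) ≤
      √(2 * e * (1 - ((⌊(1 / 2 : ℝ) + √(2 * e + 1 / 4)⌋ : ℤ) : ℝ)⁻¹)) := by
  have hω : 1 ≤ H.cliqueNum := by
    simpa using IsClique.card_le_cliqueNum (G := H) (t := {Classical.arbitrary V}) (tc := by simp)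
  have hωK : (H.cliqueNum : ℝ) ≤ ⌊(1 / 2 : ℝ) + √(2 * e + 1 / 4)⌋ := by
    have hmono : (1 / 2 : ℝ) + √(2 * #H.edgeFinset + 1 / 4) ≤ 1 / 2 + √(2 * e + 1 / 4) := by
      gcongr
    exact_mod_cast H.cliqueNum_le_floor_half_add_sqrt.trans (Int.floor_mono hmono)
  gcongr
  · exact sub_nonneg.mpr (inv_le_one_of_one_le₀ (by exact_mod_cast hω))
  · linarith [(#H.edgeFinset).cast_nonneg (α := ℝ)]

end SimpleGraph

section SignedGraph

variable {V : Type*}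

lemma walkSign_eq_of_forall_dart {G : SimpleGraph V} {σ : V → V → ℝ} {η : V → ℝ}
    (hη : ∀ v, η v * η v = 1) {u v : V} (w : G.Walk u v)
    (h : ∀ d ∈ w.darts, σ d.fst d.snd = η d.fst * η d.snd) : walkSign σ w = η u * η v := by
  induction w with
  | nil => simp [walkSign, hη]
  | @cons u b v hadj p ih =>
    have hp : walkSign σ p = η b * η v := ih fun d hd => h d (by simp [hd])
    have hub : σ u b = η u * η b := h ⟨(u, b), hadj⟩ (by simp)
    calc walkSign σ (p.cons hadj) = σ u b * walkSign σ p := by simp [walkSign]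
      _ = η u * (η b * η b) * η v := by rw [hub, hp]; ring
      _ = η u * η v := by rw [hη, mul_one]

/-- Both orientations are required so that no symmetry of `σ` is needed. -/
def switchedPositivePart (G : SimpleGraph V) (σ : V → V → ℝ) (η : V → ℝ) : SimpleGraph V where
  Adj u v := G.Adj u v ∧ σ u v = η u * η v ∧ σ v u = η v * η u
  symm := ⟨fun _ _ h => ⟨h.1.symm, h.2.2, h.2.1⟩⟩
  loopless := ⟨fun v h => G.loopless.irrefl v h.1⟩

variable {G : SimpleGraph V} {σ : V → V → ℝ} {η : V → ℝ}

@[simp]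
lemma switchedPositivePart_adj {u v : V} :
    (switchedPositivePart G σ η).Adj u v ↔
      G.Adj u v ∧ σ u v = η u * η v ∧ σ v u = η v * η u :=
  Iff.rfl

noncomputable instance [DecidableRel G.Adj] : DecidableRel (switchedPositivePart G σ η).Adj :=
  fun _ _ => decidable_of_iff' _ switchedPositivePart_adj

lemma switchedPositivePart_le : switchedPositivePart G σ η ≤ G := fun _ _ h => h.1

lemma isBalanced_switchedPositivePart (hη : ∀ v, η v * η v = 1) :
    IsBalanced (switchedPositivePart G σ η) σ := fun u w _ => by
  rw [walkSign_eq_of_forall_dart hη w fun d _ => (switchedPositivePart_adj.mp d.adj).2.1, hη]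

end SignedGraph

lemma exists_sign_mul_abs_eq (x : V → ℝ) :
    ∃ η : V → ℝ, (∀ v, η v = 1 ∨ η v = -1) ∧ ∀ v, x v = η v * |x v| :=
  ⟨fun v => if x v < 0 then -1 else 1, fun v => by by_cases h : x v < 0 <;> simp [h],
    fun v => by by_cases h : x v < 0 <;> simp [h, abs_of_neg, abs_of_nonneg (not_lt.mp h)]⟩

lemma frustration_add_card_edgeFinset_le {n : ℕ} {G H : SimpleGraph (Fin n)} [DecidableRel G.Adj]
    [DecidableRel H.Adj] {σ : Fin n → Fin n → ℝ} {ε : ℕ} (hε : ε ∈ lowerBounds (FrustrationSet G σ))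
    (hHG : H ≤ G) (hH : IsBalanced H σ) : ε + #H.edgeFinset ≤ #G.edgeFinset := by
  have hsub : H.edgeFinset ⊆ G.edgeFinset := SimpleGraph.edgeFinset_mono hHG
  have hF : ε ≤ #(G.edgeFinset \ H.edgeFinset) := hε ⟨G.edgeFinset \ H.edgeFinset, by simp,
    by simpa [SimpleGraph.deleteEdges_sdiff_eq_of_le hHG] using hH, rfl⟩
  rw [card_sdiff_of_subset hsub] at hF
  have := card_le_card hsub
  omega

lemma dotProduct_signedAdj_mulVec_le {n : ℕ} {G : SimpleGraph (Fin n)} [DecidableRel G.Adj]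
    {σ : Fin n → Fin n → ℝ} (hσ : IsSignFn G σ) (x η : Fin n → ℝ) (hη : ∀ v, η v = 1 ∨ η v = -1)
    (hx : ∀ v, x v = η v * |x v|) :
    x ⬝ᵥ signedAdj G σ *ᵥ x ≤
      (fun v => |x v|) ⬝ᵥ (switchedPositivePart G σ η).adjMatrix ℝ *ᵥ fun v => |x v| := by
  rw [SimpleGraph.dotProduct_mulVec_adjMatrix]
  simp only [dotProduct, mulVec, signedAdj, mul_sum]
  refine sum_le_sum fun u _ => sum_le_sum fun v _ => ?_
  by_cases huv : G.Adj u v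
  · have hxx : x u * (σ u v * x v) = σ u v * (η u * η v) * (|x u| * |x v|) := by
      conv_lhs => rw [hx u, hx v]
      ring
    rw [if_pos huv, hxx]
    rcases hσ.2 u v huv with hs | hs <;> rcases hη u with hu | hu <;> rcases hη v with hv | hv <;>
      norm_num [huv, hs, hu, hv, hσ.1 v u] <;> positivity
  · simp [huv]

/-- `λ₁(Σ) ≤ √(2(m - ε(Σ))(1 - ⌊1/2 + √(2(m - ε(Σ)) + 1/4)⌋⁻¹))`. -/
theorem stmt_8 {n : ℕ} (G : SimpleGraph (Fin n)) [DecidableRel G.Adj]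
    (σ : Fin n → Fin n → ℝ) (hσ : IsSignFn G σ)
    (hA : (signedAdj G σ).IsHermitian)
    (lam1 : ℝ) (hlam : IsGreatest (Set.range hA.eigenvalues) lam1)
    (ε : ℕ) (hε : IsLeast (FrustrationSet G σ) ε) :
    lam1 ≤ Real.sqrt (2 * ((G.edgeFinset.card : ℝ) - ε) *
      (1 - ((⌊(1 / 2 : ℝ) + Real.sqrt (2 * ((G.edgeFinset.card : ℝ) - ε) + 1 / 4)⌋ : ℝ))⁻¹)) := by
  obtain ⟨i, rfl⟩ := hlam.1
  have : Nonempty (Fin n) := ⟨i⟩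
  set x : Fin n → ℝ := ⇑(hA.eigenvectorBasis i)
  obtain ⟨η, hη, hx⟩ := exists_sign_mul_abs_eq x
  set H := switchedPositivePart G σ η
  have hunit : ∑ v, |x v| ^ 2 = 1 := by
    have h := hA.eigenvectorBasis.orthonormal.1 i
    rw [EuclideanSpace.norm_eq, Real.sqrt_eq_one] at h
    simpa [Real.norm_eq_abs] using h
  have hE : (#H.edgeFinset : ℝ) ≤ #G.edgeFinset - ε := by
    rw [le_sub_iff_add_le']
    exact_mod_cast frustration_add_card_edgeFinset_le hε.2 switchedPositivePart_le
      (isBalanced_switchedPositivePart fun v => by rcases hη v with h | h <;> simp [h])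
  calc hA.eigenvalues i = x ⬝ᵥ signedAdj G σ *ᵥ x := by simp [hA.eigenvalues_eq, x]
    _ ≤ (fun v => |x v|) ⬝ᵥ H.adjMatrix ℝ *ᵥ fun v => |x v| :=
      dotProduct_signedAdj_mulVec_le hσ x η hη hx
    _ ≤ √(2 * #H.edgeFinset * (1 - (H.cliqueNum : ℝ)⁻¹)) :=
      H.dotProduct_adjMatrix_mulVec_le_sqrt _ hunit
    _ ≤ _ := H.sqrt_mul_one_sub_inv_cliqueNum_le hE
end

section
/- Let A be the symmetric 5×5 matrix with zero diagonal whose nonzero entries are a₁₂ = a₂₁ = −1 and a₂₃ = a₃₂ = a₃₄ = a₄₃ = a₄₅ = a₅₄ = a₁₅ = a₅₁ = 1 (the adjacency matrix of the 5-cycle with exactly one negative edge). If λ₁ ≥ λ₂ are the two largest eigenvalues of A, then λ₁² + λ₂² > 5. In particular, the inequality λ₁² + λ₂² ≤ m for triangle-free graphs with m edges fails for signed graphs. -/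
open Matrix Finset

/-- The adjacency matrix of the `5`-cycle with exactly one negative edge. -/
def A5 : Matrix (Fin 5) (Fin 5) ℝ :=
  !![0, -1, 0, 0, 1;
     -1, 0, 1, 0, 0;
     0, 1, 0, 1, 0;
     0, 0, 1, 0, 1;
     1, 0, 0, 1, 0]

/-!
`A5` satisfies `(A5 + 2)(A5² - A5 - 1) = 0`, so every eigenvalue is `-2`, `φ` or `ψ`. The trace
is `0`, which forces the second largest eigenvalue to be `φ`; hence
`λ₁² + λ₂² ≥ 2φ² = 2φ + 2 > 5`.
-/

open Polynomial Real
open scoped goldenRatio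

theorem Polynomial.eval_eq_zero_of_mem_spectrum {𝕜 R : Type*} [Field 𝕜] [Ring R] [Nontrivial R]
    [Algebra 𝕜 R] {a : R} {p : 𝕜[X]} (hp : aeval a p = 0) {t : 𝕜} (ht : t ∈ spectrum 𝕜 a) :
    p.eval t = 0 := by
  have := spectrum.subset_polynomial_aeval a p ⟨t, ht, rfl⟩
  rwa [hp, spectrum.zero_eq, Set.mem_singleton_iff] at this

lemma A5_add_two_mul_sq_sub_sub_one : (A5 + 2) * (A5 ^ 2 - A5 - 1) = 0 := by
  ext i j
  fin_cases i <;> fin_cases j <;>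
    simp [A5, sq, Matrix.mul_apply, Fin.sum_univ_five, Matrix.ofNat_apply, Matrix.one_apply] <;>
    norm_num

lemma A5_trace : A5.trace = 0 := by
  simp [A5, Matrix.trace, Fin.sum_univ_five]

lemma eq_neg_two_or_eq_goldenRatio_or_eq_goldenConj {t : ℝ}
    (ht : (t + 2) * (t ^ 2 - t - 1) = 0) : t = -2 ∨ t = φ ∨ t = ψ := by
  have hquad : t ^ 2 - t - 1 = (t - φ) * (t - ψ) := by
    linear_combination t * goldenRatio_add_goldenConj - goldenRatio_mul_goldenConj
  rw [hquad, ← mul_assoc] at ht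
  rcases mul_eq_zero.1 ht with ht | ht
  · rcases mul_eq_zero.1 ht with ht | ht
    · exact .inl (by linarith)
    · exact .inr (.inl (by linarith))
  · exact .inr (.inr (by linarith))

lemma A5_eigenvalues (hA : A5.IsHermitian) (i : Fin 5) :
    hA.eigenvalues i = -2 ∨ hA.eigenvalues i = φ ∨ hA.eigenvalues i = ψ := by
  apply eq_neg_two_or_eq_goldenRatio_or_eq_goldenConj
  have hp : aeval A5 ((X + 2) * (X ^ 2 - X - 1) : ℝ[X]) = 0 := by
    simpa [map_ofNat] using A5_add_two_mul_sq_sub_sub_one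
  simpa using eval_eq_zero_of_mem_spectrum hp (hA.eigenvalues_mem_spectrum_real i)

lemma A5_sum_eigenvalues (hA : A5.IsHermitian) : ∑ i, hA.eigenvalues i = 0 := by
  simpa [A5_trace] using hA.trace_eq_sum_eigenvalues.symm

lemma goldenConj_lt_neg_one_third : ψ < -1 / 3 := by
  nlinarith [goldenConj_sq, goldenConj_neg]

lemma three_halves_lt_goldenRatio : 3 / 2 < φ := by
  nlinarith [goldenRatio_sq, goldenRatio_pos]

/-- For the signed `5`-cycle with one negative edge,
`λ₁² + λ₂² > 5 = m`. -/
theorem stmt_13 (hA : A5.IsHermitian)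
    (μ : Fin 5 → ℝ) (hmono : Antitone μ)
    (hperm : ∃ e : Equiv.Perm (Fin 5), ∀ i, μ i = hA.eigenvalues (e i)) :
    μ 0 ^ 2 + μ 1 ^ 2 > 5 := by
  obtain ⟨e, he⟩ := hperm
  have hμ : ∀ i, μ i = -2 ∨ μ i = φ ∨ μ i = ψ := fun i => he i ▸ A5_eigenvalues hA (e i)
  have hsum : μ 0 + μ 1 + μ 2 + μ 3 + μ 4 = 0 := by
    rw [← Fin.sum_univ_five, funext he, Equiv.sum_comp e hA.eigenvalues, A5_sum_eigenvalues]
  have h0 : μ 0 ≤ φ := by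
    rcases hμ 0 with h | h | h <;> rw [h] <;> linarith [goldenConj_neg, goldenRatio_pos]
  -- otherwise `μ 1, …, μ 4 ≤ ψ`, and the trace would be at most `φ + 4ψ = 1 + 3ψ < 0`
  have h1 : μ 1 = φ := by
    by_contra hne
    have h1ψ : μ 1 ≤ ψ := by
      rcases hμ 1 with h | h | h
      · linarith [neg_one_lt_goldenConj]
      · exact absurd h hne
      · exact h.le
    have h21 : μ 2 ≤ μ 1 := hmono (by decide)
    have h32 : μ 3 ≤ μ 2 := hmono (by decide)
    have h43 : μ 4 ≤ μ 3 := hmono (by decide)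
    linarith [ goldenRatio_add_goldenConj, goldenConj_lt_neg_one_third]
  have h10 : μ 1 ≤ μ 0 := hmono (by decide)
  nlinarith [goldenRatio_sq, three_halves_lt_goldenRatio]
end

section
/- Let G be a finite simple graph with m edges and t(G) triangles, and let λ₁(G) be the largest eigenvalue of its adjacency matrix. Then λ₁(G)² ≤ m + (6 t(G))^{2/3}. -/
open Matrix Finset

/-!
Write `λᵢ` for the eigenvalues of `A = A(G)`, so that `∑ λᵢ = tr A = 0`, `∑ λᵢ² = tr A² = 2m`
and `∑ λᵢ³ = tr A³ = 6t`. The first sum forces `λ = λ₁ ≥ 0`, and we may assume `λ² > m`.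
The other eigenvalues satisfy `∑ λᵢ² = r²` with `r² = 2m - λ²`, hence `∑ |λᵢ|³ ≤ r³`, so
`6t ≥ λ³ - r³`. Putting `a² = λ² - m`, so that `λ² = r² + 2a²`, gives
`λ³ = λ r² + 2 λ a² ≥ r³ + a³`; hence `a³ ≤ 6t`, i.e. `λ² - m ≤ (6t)^{2/3}`.
-/

theorem Finset.card_filter_distinct_triples {α : Type*} [DecidableEq α] (s : Finset α) :
    #{p ∈ s ×ˢ s ×ˢ s | p.1 ≠ p.2.1 ∧ p.2.1 ≠ p.2.2 ∧ p.2.2 ≠ p.1} =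
      #s * (#s - 1) * (#s - 2) := by
  have hfiber : ∀ x ∈ s,
      #{p ∈ s ×ˢ s ×ˢ s | (p.1 ≠ p.2.1 ∧ p.2.1 ≠ p.2.2 ∧ p.2.2 ≠ p.1) ∧ p.1 = x} =
        (#s - 1) * (#s - 2) := by
    intro x hx
    have : {p ∈ s ×ˢ s ×ˢ s | (p.1 ≠ p.2.1 ∧ p.2.1 ≠ p.2.2 ∧ p.2.2 ≠ p.1) ∧ p.1 = x} =
        {x} ×ˢ (s.erase x).offDiag := by
      ext ⟨a, b, c⟩
      simp only [mem_filter, mem_product, mem_singleton, mem_offDiag, mem_erase]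
      aesop
    rw [this, card_product, card_singleton, one_mul, offDiag_card, card_erase_of_mem hx,
      ← Nat.mul_sub_one, Nat.sub_sub]
  rw [card_eq_sum_card_fiberwise (f := Prod.fst) (t := s)
    fun p hp => (mem_product.1 (mem_filter.1 hp).1).1]
  simp only [filter_filter]
  rw [sum_congr rfl hfiber, sum_const, smul_eq_mul, mul_assoc]

theorem Finset.sum_abs_pow_three_le_sqrt_sum_sq_pow_three {ι : Type*} (s : Finset ι)
    (f : ι → ℝ) : ∑ i ∈ s, |f i| ^ 3 ≤ √(∑ i ∈ s, f i ^ 2) ^ 3 := by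
  have hsq : 0 ≤ ∑ i ∈ s, f i ^ 2 := sum_nonneg fun i _ => sq_nonneg (f i)
  calc ∑ i ∈ s, |f i| ^ 3 = ∑ i ∈ s, |f i| * f i ^ 2 :=
        sum_congr rfl fun i _ => by rw [← sq_abs (f i)]; ring
    _ ≤ ∑ i ∈ s, √(∑ j ∈ s, f j ^ 2) * f i ^ 2 := sum_le_sum fun i hi =>
        mul_le_mul_of_nonneg_right (Real.abs_le_sqrt
          (single_le_sum (fun j _ => sq_nonneg (f j)) hi)) (sq_nonneg _)
    _ = √(∑ i ∈ s, f i ^ 2) * √(∑ i ∈ s, f i ^ 2) ^ 2 := by rw [← mul_sum, Real.sq_sqrt hsq]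
    _ = √(∑ i ∈ s, f i ^ 2) ^ 3 := by ring

theorem pow_three_add_pow_three_le {l r a : ℝ} (hl : 0 ≤ l) (hr : 0 ≤ r) (ha : 0 ≤ a)
    (h : l ^ 2 = r ^ 2 + 2 * a ^ 2) : r ^ 3 + a ^ 3 ≤ l ^ 3 := by
  have hrl : r ≤ l := (pow_le_pow_iff_left₀ hr hl two_ne_zero).1 (by nlinarith)
  have hal : a ≤ l := (pow_le_pow_iff_left₀ ha hl two_ne_zero).1 (by nlinarith)
  nlinarith [mul_le_mul_of_nonneg_right hrl (sq_nonneg r),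
    mul_le_mul_of_nonneg_right hal (sq_nonneg a), pow_nonneg ha 3]

theorem sq_le_half_sum_sq_add_sum_pow_three_rpow {ι : Type*} [Fintype ι] [DecidableEq ι]
    (e : ι → ℝ) {i₀ : ι} (h₀ : 0 ≤ e i₀) (h₃ : 0 ≤ ∑ i, e i ^ 3) :
    e i₀ ^ 2 ≤ (∑ i, e i ^ 2) / 2 + (∑ i, e i ^ 3) ^ ((2 : ℝ) / 3) := by
  rcases le_or_gt (e i₀ ^ 2) ((∑ i, e i ^ 2) / 2) with h | h
  · linarith [Real.rpow_nonneg h₃ ((2 : ℝ) / 3)]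
  obtain ⟨a, ha₀, ha⟩ : ∃ a, 0 ≤ a ∧ a ^ 2 = e i₀ ^ 2 - (∑ i, e i ^ 2) / 2 :=
    ⟨_, Real.sqrt_nonneg _, Real.sq_sqrt (by linarith)⟩
  have hsq := add_sum_erase univ (fun i => e i ^ 2) (mem_univ i₀)
  have hcube := add_sum_erase univ (fun i => e i ^ 3) (mem_univ i₀)
  set R := ∑ i ∈ univ.erase i₀, e i ^ 2
  have hsplit : √R ^ 3 + a ^ 3 ≤ e i₀ ^ 3 :=
    pow_three_add_pow_three_le h₀ (Real.sqrt_nonneg _) ha₀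
      (by rw [Real.sq_sqrt (sum_nonneg fun i _ => sq_nonneg (e i))]; linarith)
  have hrest : -√R ^ 3 ≤ ∑ i ∈ univ.erase i₀, e i ^ 3 := by
    refine le_trans ?_ (sum_le_sum fun i _ => neg_abs_le (e i ^ 3))
    rw [sum_neg_distrib, neg_le_neg_iff]
    simpa only [abs_pow] using sum_abs_pow_three_le_sqrt_sum_sq_pow_three (univ.erase i₀) e
  have hrpow : (a ^ 3) ^ ((2 : ℝ) / 3) = a ^ 2 := by
    rw [← Real.rpow_natCast, ← Real.rpow_mul ha₀]; norm_num
  have := Real.rpow_le_rpow (pow_nonneg ha₀ 3) (by linarith : a ^ 3 ≤ ∑ i, e i ^ 3)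
    (by norm_num : (0 : ℝ) ≤ 2 / 3)
  linarith

theorem Matrix.IsHermitian.trace_pow_eq_sum_eigenvalues_pow {𝕜 n : Type*} [RCLike 𝕜]
    [Fintype n] [DecidableEq n] {A : Matrix n n 𝕜} (hA : A.IsHermitian) (k : ℕ) :
    (A ^ k).trace = ∑ i, (hA.eigenvalues i : 𝕜) ^ k := by
  conv_lhs => rw [hA.spectral_theorem, ← map_pow, Unitary.conjStarAlgAut_apply, trace_mul_cycle]
  simp [diagonal_pow, trace_diagonal]

namespace SimpleGraph

variable {V : Type*} [Fintype V] [DecidableEq V] (G : SimpleGraph V) [DecidableRel G.Adj]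

theorem filter_triangle_eq_filter_distinct {s : Finset V} (hs : G.IsNClique 3 s) :
    ({p : V × V × V | (G.Adj p.1 p.2.1 ∧ G.Adj p.2.1 p.2.2 ∧ G.Adj p.2.2 p.1) ∧
      {p.1, p.2.1, p.2.2} = s} : Finset (V × V × V)) =
      {p ∈ s ×ˢ s ×ˢ s | p.1 ≠ p.2.1 ∧ p.2.1 ≠ p.2.2 ∧ p.2.2 ≠ p.1} := by
  ext ⟨a, b, c⟩
  simp only [mem_filter, mem_univ, true_and, mem_product]
  constructor
  · rintro ⟨⟨hab, hbc, hca⟩, rfl⟩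
    simp [hab.ne, hbc.ne, hca.ne]
  · rintro ⟨⟨ha, hb, hc⟩, hab, hbc, hca⟩
    refine ⟨⟨hs.isClique ha hb hab, hs.isClique hb hc hbc, hs.isClique hc ha hca⟩, ?_⟩
    refine eq_of_subset_of_card_le (by simp [insert_subset_iff, ha, hb, hc]) ?_
    rw [hs.card_eq, card_eq_three.2 ⟨a, b, c, hab, hca.symm, hbc, rfl⟩]

theorem card_filter_triangle :
    #{p : V × V × V | G.Adj p.1 p.2.1 ∧ G.Adj p.2.1 p.2.2 ∧ G.Adj p.2.2 p.1} =
      6 * #(G.cliqueFinset 3) := by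
  rw [card_eq_sum_card_fiberwise (f := fun p => {p.1, p.2.1, p.2.2}) (t := G.cliqueFinset 3)
    fun ⟨a, b, c⟩ h => by
      rw [mem_coe, mem_filter_univ] at h
      simpa [is3Clique_triple_iff] using ⟨h.1, h.2.2.symm, h.2.1⟩]
  rw [sum_const_nat fun s hs => ?_, mul_comm]
  rw [mem_cliqueFinset_iff] at hs
  rw [filter_filter, filter_triangle_eq_filter_distinct G hs, card_filter_distinct_triples,
    hs.card_eq]

theorem trace_adjMatrix_sq {α : Type*} [Semiring α] :
    ((G.adjMatrix α) ^ 2).trace = 2 * #G.edgeFinset := by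
  simp only [Matrix.trace, diag_apply, sq, adjMatrix_mul_self_apply_self]
  rw [← Nat.cast_sum, sum_degrees_eq_twice_card_edges, Nat.cast_mul, Nat.cast_ofNat]

theorem trace_adjMatrix_pow_three {α : Type*} [Semiring α] :
    ((G.adjMatrix α) ^ 3).trace = 6 * #(G.cliqueFinset 3) := by
  rw [show (6 : α) * #(G.cliqueFinset 3) = (6 * #(G.cliqueFinset 3) : ℕ) by norm_cast,
    ← card_filter_triangle]
  simp only [Matrix.trace, diag_apply, pow_three, mul_apply, adjMatrix_apply, ite_mul, one_mul,
    zero_mul, card_filter, Fintype.sum_prod_type, ite_sum_zero, ite_and, Nat.cast_sum,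
    Nat.cast_ite, Nat.cast_one, Nat.cast_zero]

end SimpleGraph

/-- `λ₁(G)² ≤ m + (6 t(G))^(2/3)` for an unsigned graph `G`. -/
theorem stmt_15 {n : ℕ} (G : SimpleGraph (Fin n)) [DecidableRel G.Adj]
    (hA : (G.adjMatrix ℝ).IsHermitian)
    (lam1 : ℝ) (hlam : IsGreatest (Set.range hA.eigenvalues) lam1) :
    lam1 ^ 2 ≤ (G.edgeFinset.card : ℝ) +
      (6 * ((G.cliqueFinset 3).card : ℝ)) ^ ((2 : ℝ) / 3) := by
  obtain ⟨i₀, rfl⟩ := hlam.1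
  have hpow (k : ℕ) : ∑ i, hA.eigenvalues i ^ k = ((G.adjMatrix ℝ) ^ k).trace := by
    simp [hA.trace_pow_eq_sum_eigenvalues_pow]
  have hsum : ∑ i, hA.eigenvalues i = 0 := by
    simpa [G.trace_adjMatrix (α := ℝ)] using hpow 1
  obtain ⟨i, -, hi⟩ := exists_le_of_sum_le (univ_nonempty_iff.2 ⟨i₀⟩)
    (by simp [hsum] : ∑ _i : Fin n, (0 : ℝ) ≤ ∑ i, hA.eigenvalues i)
  have h₀ : 0 ≤ hA.eigenvalues i₀ := hi.trans (hlam.2 ⟨i, rfl⟩)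
  have := sq_le_half_sum_sq_add_sum_pow_three_rpow hA.eigenvalues h₀
    (by rw [hpow, G.trace_adjMatrix_pow_three]; positivity)
  rwa [hpow, hpow, G.trace_adjMatrix_sq, G.trace_adjMatrix_pow_three,
    mul_div_cancel_left₀ _ two_ne_zero] at this
end

section
/- Let Σ = (G, σ) be a signed graph with adjacency matrix A(Σ), spectral radius ρ(Σ), and signed walk counts w_k(Σ) = eᵀA(Σ)^{k−1}e. Then for every integer r > 0 and every odd integer q > 0, w_{q+r}(Σ) ≤ ρ(Σ)^r · w_q(Σ); in particular, if w_q(Σ) > 0 then w_{q+r}(Σ)/w_q(Σ) ≤ ρ(Σ)^r. -/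
open Matrix Finset

/-- The signed walk count `w_k(Σ) = eᵀ A(Σ)^(k-1) e`. -/
noncomputable def signedWalkSum {n : ℕ} (G : SimpleGraph (Fin n)) [DecidableRel G.Adj]
    (σ : Fin n → Fin n → ℝ) (k : ℕ) : ℝ :=
  (fun _ => (1 : ℝ)) ⬝ᵥ ((signedAdj G σ) ^ (k - 1)) *ᵥ (fun _ => (1 : ℝ))

/-!
Diagonalising `A = U diag(λ) Uᴴ` gives `eᵀ A^m e = ∑ᵢ cᵢ² λᵢ^m` with `c = Uᴴ e`. For odd `q` the
exponent `q - 1` is even, so each term `cᵢ² λᵢ^(q-1)` is nonnegative, and multiplying it by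
`λᵢ^r ≤ ρ^r` bounds `w_{q+r}` termwise by `ρ^r w_q`.
-/

theorem Finset.sum_mul_pow_add_le {ι : Type*} (s : Finset ι) {a x : ι → ℝ} {ρ : ℝ}
    (ha : ∀ i ∈ s, 0 ≤ a i) (hx : ∀ i ∈ s, |x i| ≤ ρ) {k : ℕ} (hk : Even k) (r : ℕ) :
    ∑ i ∈ s, a i * x i ^ (k + r) ≤ ρ ^ r * ∑ i ∈ s, a i * x i ^ k := by
  rw [Finset.mul_sum]
  refine Finset.sum_le_sum fun i hi => ?_
  have hxr : x i ^ r ≤ ρ ^ r :=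
    (le_abs_self _).trans ((abs_pow _ _).trans_le (pow_le_pow_left₀ (abs_nonneg _) (hx i hi) r))
  calc a i * x i ^ (k + r) = a i * x i ^ k * x i ^ r := by rw [pow_add, mul_assoc]
    _ ≤ a i * x i ^ k * ρ ^ r :=
      mul_le_mul_of_nonneg_left hxr (mul_nonneg (ha i hi) (hk.pow_nonneg _))
    _ = ρ ^ r * (a i * x i ^ k) := mul_comm _ _

namespace Matrix.IsHermitian

variable {𝕜 n : Type*} [RCLike 𝕜] [Fintype n] [DecidableEq n] {A : Matrix n n 𝕜}

theorem spectral_theorem_pow (hA : A.IsHermitian) (m : ℕ) :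
    A ^ m = Unitary.conjStarAlgAut 𝕜 _ hA.eigenvectorUnitary
      (diagonal fun i => (hA.eigenvalues i ^ m : 𝕜)) := by
  conv_lhs => rw [hA.spectral_theorem]
  rw [← map_pow, diagonal_pow]
  rfl

theorem star_dotProduct_pow_mulVec (hA : A.IsHermitian) (m : ℕ) (v : n → 𝕜) :
    star v ⬝ᵥ (A ^ m *ᵥ v) =
      ∑ i, ((‖(star (hA.eigenvectorUnitary : Matrix n n 𝕜) *ᵥ v) i‖ ^ 2
        * hA.eigenvalues i ^ m : ℝ) : 𝕜) := by
  set U : Matrix n n 𝕜 := (hA.eigenvectorUnitary : Matrix n n 𝕜)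
  have hU : star v ᵥ* U = star (star U *ᵥ v) := by
    rw [star_mulVec, star_eq_conjTranspose, conjTranspose_conjTranspose]
  rw [hA.spectral_theorem_pow, Unitary.conjStarAlgAut_apply, ← mulVec_mulVec, ← mulVec_mulVec,
    dotProduct_mulVec, hU]
  simp only [dotProduct, mulVec_diagonal, Pi.star_apply, RCLike.star_def]
  refine Finset.sum_congr rfl fun i _ => ?_
  push_cast
  rw [← RCLike.conj_mul]
  ring

theorem dotProduct_pow_add_mulVec_le {A : Matrix n n ℝ} (hA : A.IsHermitian) {ρ : ℝ}
    (hρ : ∀ i, |hA.eigenvalues i| ≤ ρ) {k : ℕ} (hk : Even k) (r : ℕ) (v : n → ℝ) :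
    v ⬝ᵥ (A ^ (k + r) *ᵥ v) ≤ ρ ^ r * (v ⬝ᵥ (A ^ k *ᵥ v)) := by
  have hform := hA.star_dotProduct_pow_mulVec (v := v)
  simp only [star_trivial, RCLike.ofReal_real_eq_id, id] at hform
  rw [hform, hform]
  exact sum_mul_pow_add_le _ (fun i _ => sq_nonneg _) (fun i _ => hρ i) hk r

end Matrix.IsHermitian

theorem stmt_19_general {n : ℕ} (G : SimpleGraph (Fin n)) [DecidableRel G.Adj]
    (σ : Fin n → Fin n → ℝ)
    (hA : (signedAdj G σ).IsHermitian)
    (ρ : ℝ) (hρ : IsGreatest (Set.range fun i => |hA.eigenvalues i|) ρ)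
    (r q : ℕ) (hqodd : Odd q) :
    signedWalkSum G σ (q + r) ≤ ρ ^ r * signedWalkSum G σ q ∧
    (0 < signedWalkSum G σ q →
      signedWalkSum G σ (q + r) / signedWalkSum G σ q ≤ ρ ^ r) := by
  have hshift : q + r - 1 = (q - 1) + r := by have := hqodd.pos; omega
  have key : signedWalkSum G σ (q + r) ≤ ρ ^ r * signedWalkSum G σ q := by
    unfold signedWalkSum
    rw [hshift]
    exact hA.dotProduct_pow_add_mulVec_le (fun i => hρ.2 ⟨i, rfl⟩) (Nat.Odd.sub_odd hqodd odd_one) r _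
  exact ⟨key, fun hpos => (div_le_iff₀ hpos).mpr key⟩

/-- For `r > 0` and odd `q > 0`, `w_{q+r}(Σ) ≤ ρ(Σ)^r · w_q(Σ)`;
in particular, if `w_q(Σ) > 0` then `w_{q+r}(Σ)/w_q(Σ) ≤ ρ(Σ)^r`. -/
theorem stmt_19 {n : ℕ} (G : SimpleGraph (Fin n)) [DecidableRel G.Adj]
    (σ : Fin n → Fin n → ℝ) (hσ : IsSignFn G σ)
    (hA : (signedAdj G σ).IsHermitian)
    (ρ : ℝ) (hρ : IsGreatest (Set.range fun i => |hA.eigenvalues i|) ρ)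
    (r q : ℕ) (hr : 0 < r) (hq : 0 < q) (hqodd : Odd q) :
    signedWalkSum G σ (q + r) ≤ ρ ^ r * signedWalkSum G σ q ∧
    (0 < signedWalkSum G σ q →
      signedWalkSum G σ (q + r) / signedWalkSum G σ q ≤ ρ ^ r) :=
  stmt_19_general G σ hA ρ hρ r q hqodd
end
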